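/- Let A and B be Banach algebras and T : B → A a continuous algebra homomorphism with ‖T‖ ≤ 1 such that T(B) is dense in A. If A and B are both Δ-weak character amenable, then the Lau product A ×_T B is Δ-weak character amenable. -/
import Mathlib


open Filter Topology

section Defs

variable (A : Type*) [NonUnitalNormedRing A] [NormedSpace ℂ A]
  [IsScalarTower ℂ A A] [SMulCommClass ℂ A A]

/-- `φ` is a nonzero (continuous, multiplicative, linear) character on `A`. -/
def IsChar (φ : A →L[ℂ] ℂ) : Prop :=
  φ ≠ 0 ∧ ∀ a b : A, φ (a * b) = φ a * φ b

/-- The action `f · a` of `A` on `A*`: `(f·a)(b) = f (a*b)`. -/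
noncomputable def dualAct (f : A →L[ℂ] ℂ) (a : A) : A →L[ℂ] ℂ :=
  f.comp (ContinuousLinearMap.mul ℂ A a)

/-- `A` is Δ-weak `φ`-amenable. -/
def DeltaWeakAmenable (φ : A →L[ℂ] ℂ) : Prop :=
  ∃ m : (A →L[ℂ] ℂ) →L[ℂ] ℂ, m φ = 0 ∧
    ∀ (a : A) (ψ : A →L[ℂ] ℂ), IsChar A ψ → ψ ≠ φ → m (dualAct A ψ a) = ψ a

/-- `A` is Δ-weak character amenable. -/
def DeltaWeakCharAmenable : Prop :=
  ∀ φ : A →L[ℂ] ℂ, (IsChar A φ ∨ φ = 0) → DeltaWeakAmenable A φ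

/-- `u` is a Δ-weak approximate identity for `A` (along the filter `l`). -/
def DeltaWeakApproxIdentity {ι : Type*} (l : Filter ι) (u : ι → A) : Prop :=
  ∀ (a : A) (φ : A →L[ℂ] ℂ), IsChar A φ →
    Tendsto (fun i => φ (a * u i)) l (𝓝 (φ a))

end Defs

/-- `L`, together with the linear identification `e : L ≃ A × B`, is (a realization of)
the Lau product `A ×_T B`: the norm is `‖(a,b)‖ = ‖a‖ + ‖b‖` and the multiplication is
`(a₁,b₁)(a₂,b₂) = (a₁a₂ + a₁ T(b₂) + T(b₁) a₂, b₁ b₂)`. -/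
structure IsLauProduct
    (A : Type*) [NonUnitalNormedRing A] [NormedSpace ℂ A]
    [IsScalarTower ℂ A A] [SMulCommClass ℂ A A]
    (B : Type*) [NonUnitalNormedRing B] [NormedSpace ℂ B]
    [IsScalarTower ℂ B B] [SMulCommClass ℂ B B]
    (L : Type*) [NonUnitalNormedRing L] [NormedSpace ℂ L]
    [IsScalarTower ℂ L L] [SMulCommClass ℂ L L]
    (T : B →L[ℂ] A) (e : L ≃ₗ[ℂ] A × B) : Prop where
  norm_eq : ∀ x : L, ‖x‖ = ‖(e x).1‖ + ‖(e x).2‖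
  mul_eq : ∀ x y : L,
    e (x * y) = ((e x).1 * (e y).1 + (e x).1 * T ((e y).2) + T ((e x).2) * (e y).1,
      (e x).2 * (e y).2)

section Aux

variable {A : Type*} [NonUnitalNormedRing A] [NormedSpace ℂ A]
  [IsScalarTower ℂ A A] [SMulCommClass ℂ A A]

lemma dualAct_char {ψ : A →L[ℂ] ℂ} (hψ : IsChar A ψ) (a : A) :
    dualAct A ψ a = ψ a • ψ := by
  ext b
  simp [dualAct, hψ.2 a b]

lemma exists_m (hA : DeltaWeakCharAmenable A) (φ : A →L[ℂ] ℂ)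
    (hφ : IsChar A φ ∨ φ = 0) :
    ∃ m : (A →L[ℂ] ℂ) →L[ℂ] ℂ, m φ = 0 ∧
      ∀ ψ : A →L[ℂ] ℂ, IsChar A ψ → ψ ≠ φ → m ψ = 1 := by
  obtain ⟨m, hm0, hm1⟩ := hA φ hφ
  refine ⟨m, hm0, fun ψ hψ hne => ?_⟩
  obtain ⟨a, ha⟩ : ∃ a, ψ a ≠ 0 := by
    by_contra h
    push_neg at h
    exact hψ.1 (ContinuousLinearMap.ext fun a => by simp [h a])
  have := hm1 a ψ hψ hne
  rw [dualAct_char hψ a] at this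
  rw [map_smul, smul_eq_mul] at this
  have := mul_left_cancel₀ ha (this.trans (mul_one (ψ a)).symm)
  exact this

lemma amenable_of_m (φ : A →L[ℂ] ℂ) (m : (A →L[ℂ] ℂ) →L[ℂ] ℂ)
    (h0 : m φ = 0) (h1 : ∀ ψ : A →L[ℂ] ℂ, IsChar A ψ → ψ ≠ φ → m ψ = 1) :
    DeltaWeakAmenable A φ := by
  refine ⟨m, h0, fun a ψ hψ hne => ?_⟩
  rw [dualAct_char hψ a, map_smul, h1 ψ hψ hne, smul_eq_mul, mul_one]

end Aux

section Main

variable {A : Type*} [NonUnitalNormedRing A] [NormedSpace ℂ A]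
  [IsScalarTower ℂ A A] [SMulCommClass ℂ A A]
  {B : Type*} [NonUnitalNormedRing B] [NormedSpace ℂ B]
  [IsScalarTower ℂ B B] [SMulCommClass ℂ B B]
  {L : Type*} [NonUnitalNormedRing L] [NormedSpace ℂ L]
  [IsScalarTower ℂ L L] [SMulCommClass ℂ L L]
  (T : B →L[ℂ] A) (e : L ≃ₗ[ℂ] A × B)

/-- The embedding `a ↦ e⁻¹ (a, 0)` as a continuous linear map. -/
noncomputable def jA (hL : IsLauProduct A B L T e) : A →L[ℂ] L :=
  LinearMap.mkContinuous
    ((e.symm : A × B →ₗ[ℂ] L).comp (LinearMap.inl ℂ A B)) 1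
    (fun a => by
      have := hL.norm_eq (e.symm (a, 0))
      rw [e.apply_symm_apply] at this
      simp only [LinearMap.coe_comp, Function.comp_apply, LinearMap.coe_inl,
        LinearEquiv.coe_coe]
      rw [this]
      simp)

/-- The embedding `b ↦ e⁻¹ (0, b)` as a continuous linear map. -/
noncomputable def jB (hL : IsLauProduct A B L T e) : B →L[ℂ] L :=
  LinearMap.mkContinuous
    ((e.symm : A × B →ₗ[ℂ] L).comp (LinearMap.inr ℂ A B)) 1
    (fun b => by
      have := hL.norm_eq (e.symm (0, b))
      rw [e.apply_symm_apply] at this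
      simp only [LinearMap.coe_comp, Function.comp_apply, LinearMap.coe_inr,
        LinearEquiv.coe_coe]
      rw [this]
      simp)

variable (hL : IsLauProduct A B L T e)

lemma jA_apply (a : A) : jA T e hL a = e.symm (a, 0) := rfl
lemma jB_apply (b : B) : jB T e hL b = e.symm (0, b) := rfl

lemma e_jA (a : A) : e (jA T e hL a) = (a, 0) := by
  rw [jA_apply, e.apply_symm_apply]
lemma e_jB (b : B) : e (jB T e hL b) = (0, b) := by
  rw [jB_apply, e.apply_symm_apply]

lemma jA_mul (a a' : A) : jA T e hL a * jA T e hL a' = jA T e hL (a * a') := by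
  apply e.injective
  rw [hL.mul_eq, e_jA, e_jA, e_jA]
  simp

lemma jB_mul (b b' : B) : jB T e hL b * jB T e hL b' = jB T e hL (b * b') := by
  apply e.injective
  rw [hL.mul_eq, e_jB, e_jB, e_jB]
  simp

lemma jA_mul_jB (a : A) (b : B) :
    jA T e hL a * jB T e hL b = jA T e hL (a * T b) := by
  apply e.injective
  rw [hL.mul_eq, e_jA, e_jB, e_jA]
  simp

/-- Reconstruction: a functional on `L` is determined by its restrictions. -/
lemma recon (ψ₁ ψ₂ : L →L[ℂ] ℂ)
    (h1 : ψ₁.comp (jA T e hL) = ψ₂.comp (jA T e hL))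
    (h2 : ψ₁.comp (jB T e hL) = ψ₂.comp (jB T e hL)) : ψ₁ = ψ₂ := by
  ext x
  have hx : x = jA T e hL (e x).1 + jB T e hL (e x).2 := by
    rw [jA_apply, jB_apply]
    rw [← map_add]
    rw [show ((e x).1, (0 : B)) + ((0 : A), (e x).2) = e x by simp]
    exact (e.symm_apply_apply x).symm
  have e1 := DFunLike.congr_fun h1 (e x).1
  have e2 := DFunLike.congr_fun h2 (e x).2
  simp only [ContinuousLinearMap.comp_apply] at e1 e2
  rw [hx, map_add, map_add, e1, e2]

/-- Classification of characters of the Lau product. -/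
lemma classify (χ : L →L[ℂ] ℂ) (hχ : IsChar L χ) :
    (IsChar A (χ.comp (jA T e hL)) ∧
      χ.comp (jB T e hL) = (χ.comp (jA T e hL)).comp T) ∨
    (χ.comp (jA T e hL) = 0 ∧ IsChar B (χ.comp (jB T e hL))) := by
  set p := χ.comp (jA T e hL) with hp
  set q := χ.comp (jB T e hL) with hq
  have pmul : ∀ a a', p (a * a') = p a * p a' := fun a a' => by
    rw [hp]
    simp only [ContinuousLinearMap.comp_apply]
    rw [← jA_mul T e hL, hχ.2]
  have qmul : ∀ b b', q (b * b') = q b * q b' := fun b b' => by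
    rw [hq]
    simp only [ContinuousLinearMap.comp_apply]
    rw [← jB_mul T e hL, hχ.2]
  have pq : ∀ a b, p (a * T b) = p a * q b := fun a b => by
    rw [hp, hq]
    simp only [ContinuousLinearMap.comp_apply]
    rw [← jA_mul_jB T e hL, hχ.2]
  by_cases hp0 : p = 0
  · refine Or.inr ⟨hp0, ?_, qmul⟩
    intro hq0
    exact hχ.1 (recon T e hL χ 0 (by simp [← hp, hp0]) (by simp [← hq, hq0]))
  · left
    obtain ⟨a₀, ha₀⟩ : ∃ a, p a ≠ 0 := by
      by_contra h
      push_neg at h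
      exact hp0 (ContinuousLinearMap.ext fun a => by simp [h a])
    refine ⟨⟨hp0, pmul⟩, ?_⟩
    ext b
    simp only [ContinuousLinearMap.comp_apply]
    have := pq a₀ b
    rw [pmul a₀ (T b)] at this
    exact (mul_left_cancel₀ ha₀ this.symm)

end Main

section Main2

variable {A : Type*} [NonUnitalNormedRing A] [NormedSpace ℂ A]
  [IsScalarTower ℂ A A] [SMulCommClass ℂ A A]
  {B : Type*} [NonUnitalNormedRing B] [NormedSpace ℂ B]
  [IsScalarTower ℂ B B] [SMulCommClass ℂ B B]
  {L : Type*} [NonUnitalNormedRing L] [NormedSpace ℂ L]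
  [IsScalarTower ℂ L L] [SMulCommClass ℂ L L]
  (T : B →L[ℂ] A) (e : L ≃ₗ[ℂ] A × B) (hL : IsLauProduct A B L T e)

lemma char_comp_T (hdense : DenseRange T)
    (hT_mul : ∀ b b' : B, T (b * b') = T b * T b')
    {p : A →L[ℂ] ℂ} (hp : IsChar A p) : IsChar B (p.comp T) := by
  constructor
  · intro h
    apply hp.1
    have hfun : (⇑p) ∘ (⇑T) = (fun _ => (0 : ℂ)) ∘ (⇑T) := by
      funext b
      exact DFunLike.congr_fun h b
    have := hdense.equalizer p.continuous continuous_const hfun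
    exact ContinuousLinearMap.ext fun a => congr_fun this a
  · intro b b'
    simp only [ContinuousLinearMap.comp_apply]
    rw [hT_mul, hp.2]

set_option synthInstance.maxHeartbeats 1000000 in
set_option maxHeartbeats 1000000 in
/-- The combined functional `h ↦ mA (h∘jA) + mB (h∘jB) - mB (h∘jA∘T)`. -/
lemma exists_combined (mA : (A →L[ℂ] ℂ) →L[ℂ] ℂ) (mB : (B →L[ℂ] ℂ) →L[ℂ] ℂ) :
    ∃ m : (L →L[ℂ] ℂ) →L[ℂ] ℂ, ∀ h : L →L[ℂ] ℂ,
      m h = mA (h.comp (jA T e hL)) + mB (h.comp (jB T e hL)) -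
        mB ((h.comp (jA T e hL)).comp T) := by
  set PA : (L →L[ℂ] ℂ) →L[ℂ] (A →L[ℂ] ℂ) :=
    (ContinuousLinearMap.compSL A L ℂ (RingHom.id ℂ) (RingHom.id ℂ)).flip
      (jA T e hL) with hPA
  set PB : (L →L[ℂ] ℂ) →L[ℂ] (B →L[ℂ] ℂ) :=
    (ContinuousLinearMap.compSL B L ℂ (RingHom.id ℂ) (RingHom.id ℂ)).flip
      (jB T e hL) with hPB
  set PT : (A →L[ℂ] ℂ) →L[ℂ] (B →L[ℂ] ℂ) :=
    (ContinuousLinearMap.compSL B A ℂ (RingHom.id ℂ) (RingHom.id ℂ)).flip T with hPT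
  refine ⟨mA.comp PA + mB.comp PB - mB.comp (PT.comp PA), fun h => ?_⟩
  simp [hPA, hPB, hPT]

end Main2

/-- if `T(B)` is dense in `A` and both `A` and `B` are Δ-weak character
amenable, then the Lau product `A ×_T B` is Δ-weak character amenable. -/
theorem lauProduct_deltaWeakCharAmenable
    (A : Type*) [NonUnitalNormedRing A] [NormedSpace ℂ A]
    [IsScalarTower ℂ A A] [SMulCommClass ℂ A A] [CompleteSpace A]
    (B : Type*) [NonUnitalNormedRing B] [NormedSpace ℂ B]
    [IsScalarTower ℂ B B] [SMulCommClass ℂ B B] [CompleteSpace B]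
    (L : Type*) [NonUnitalNormedRing L] [NormedSpace ℂ L]
    [IsScalarTower ℂ L L] [SMulCommClass ℂ L L] [CompleteSpace L]
    (T : B →L[ℂ] A) (hT_mul : ∀ b b' : B, T (b * b') = T b * T b') (hT_norm : ‖T‖ ≤ 1)
    (e : L ≃ₗ[ℂ] A × B) (hL : IsLauProduct A B L T e)
    (hdense : DenseRange T)
    (hA : DeltaWeakCharAmenable A) (hB : DeltaWeakCharAmenable B) :
    DeltaWeakCharAmenable L := by
  intro χ hχ
  have hcases : (IsChar A (χ.comp (jA T e hL)) ∧
      χ.comp (jB T e hL) = (χ.comp (jA T e hL)).comp T) ∨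
      ((χ.comp (jA T e hL)) = 0 ∧
        (IsChar B (χ.comp (jB T e hL)) ∨ χ.comp (jB T e hL) = 0)) := by
    rcases hχ with h | rfl
    · rcases classify T e hL χ h with ⟨h1, h2⟩ | ⟨h1, h2⟩
      · exact Or.inl ⟨h1, h2⟩
      · exact Or.inr ⟨h1, Or.inl h2⟩
    · exact Or.inr ⟨ContinuousLinearMap.zero_comp _,
        Or.inr (ContinuousLinearMap.zero_comp _)⟩
  rcases hcases with ⟨hpchar, hqT⟩ | ⟨hp0, hqv⟩
  · obtain ⟨mA, hmA0, hmA1⟩ := exists_m hA _ (Or.inl hpchar)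
    obtain ⟨mB, hmB0, hmB1⟩ := exists_m hB 0 (Or.inr rfl)
    obtain ⟨m, hm⟩ := exists_combined T e hL mA mB
    apply amenable_of_m χ m
    · rw [hm, hqT, add_sub_cancel_right, hmA0]
    · intro ψ hψ hne
      rw [hm]
      rcases classify T e hL ψ hψ with ⟨h1, h2⟩ | ⟨h1, h2⟩
      · rw [h2, add_sub_cancel_right]
        apply hmA1 _ h1
        intro hpe
        apply hne
        apply recon T e hL ψ χ hpe
        rw [h2, hpe, ← hqT]
      · rw [h1, ContinuousLinearMap.zero_comp, map_zero, map_zero, zero_add,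
          sub_zero]
        exact hmB1 _ h2 h2.1
  · obtain ⟨mA, hmA0, hmA1⟩ := exists_m hA 0 (Or.inr rfl)
    obtain ⟨mB, hmB0, hmB1⟩ := exists_m hB _ hqv
    obtain ⟨m, hm⟩ := exists_combined T e hL mA mB
    apply amenable_of_m χ m
    · rw [hm, hp0, ContinuousLinearMap.zero_comp, map_zero, map_zero, zero_add,
        sub_zero, hmB0]
    · intro ψ hψ hne
      rw [hm]
      rcases classify T e hL ψ hψ with ⟨h1, h2⟩ | ⟨h1, h2⟩
      · rw [h2, add_sub_cancel_right]
        exact hmA1 _ h1 h1.1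
      · rw [h1, ContinuousLinearMap.zero_comp, map_zero, map_zero, zero_add,
          sub_zero]
        apply hmB1 _ h2
        intro hqe
        exact hne (recon T e hL ψ χ (h1.trans hp0.symm) hqe)
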